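/- arXiv:1804.02874 — 2 statements merged into one kernel-verified Lean document; each statement's English description precedes it below -/
import Mathlib

section
/- Let F be a nontrivial finite group, Γ = ⊕_{i∈ℤ} F, and φ the right shift automorphism. Then every element of Γ is φ-twisted conjugate to an element supported at coordinate 0; moreover, two elements α, β supported at coordinate 0 (α_0 = x, β_0 = y, all other coordinates trivial) are φ-twisted conjugate if and only if x = y. -/
/-!
In the full product `ℤ → F` every `a` is a twisted coboundary: the descending partial products
`T i = a N * a (N - 1) * ⋯ * a (i + 1)` satisfy `T (i - 1) = T i * a i`, i.e. `T a φ(T)⁻¹ = 1`.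
`T` is `1` near `+∞` and equal to the total product `c` near `-∞`, so it is not finitely supported;
correcting it by the step function `k = c⁻¹` on `i < 0`, `1` on `i ≥ 0` gives a finitely supported
`g = k T` with `g a φ(g)⁻¹ = k φ(k)⁻¹`, which is `c` at `0` and trivial elsewhere.

Conversely, if `g δ₀(x) φ(g)⁻¹ = δ₀(y)` then `g i = g (i - 1)` for `i ≠ 0`, so `g` is constant on
`[0, ∞)` and on `(-∞, -1]`; finite support forces both constants to be `1`, and the `0`-th
coordinate reads `y = x`.
-/

variable (F : Type*) [Group F]

/-- The restricted direct product `⊕_{i∈ℤ} F`: finitely supported functions `ℤ → F`,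
as a subgroup of the full product. -/
def DirSum : Subgroup (ℤ → F) where
  carrier := {g | (Function.mulSupport g).Finite}
  mul_mem' := by
    intro a b ha hb
    exact ((ha.union hb).subset (Function.mulSupport_mul a b))
  one_mem' := by
    simp [Function.mulSupport_one]
  inv_mem' := by
    intro a ha
    simpa [Function.mulSupport_inv] using ha

/-- The right shift automorphism `(φ g)_i = g_{i-1}` on `⊕_{i∈ℤ} F`. -/
def shiftHom : DirSum F →* DirSum F where
  toFun g := ⟨fun i => g.1 (i - 1), by
    have : Function.mulSupport (fun i => g.1 (i - 1)) ⊆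
        (fun t => t + 1) '' Function.mulSupport g.1 := by
      intro i hi
      exact ⟨i - 1, hi, by ring⟩
    exact (g.2.image _).subset this⟩
  map_one' := rfl
  map_mul' := by intros; rfl

/-- The element of `⊕_{i∈ℤ} F` supported at coordinate `0` with value `x`. -/
def deltaElt (F : Type*) [Group F] (x : F) : DirSum F :=
  ⟨fun i => if i = 0 then x else 1, by
    apply Set.Finite.subset (Set.finite_singleton (0 : ℤ))
    intro i hi
    by_contra h
    exact hi (if_neg h)⟩

open Filter

section IntSequences

variable {α : Type*} {f : ℤ → α} {n : ℤ}

lemma eventually_atTop_eq_of_forall_ge_add_one (h : ∀ i ≥ n, f (i + 1) = f i) :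
    ∀ᶠ i in atTop, f i = f n := by
  filter_upwards [eventually_ge_atTop n] with i hi
  induction i, hi using Int.leInduction with
  | base => rfl
  | succ i hi ih => rw [h i hi, ih]

lemma eventually_atBot_eq_of_forall_le_sub_one (h : ∀ i ≤ n, f (i - 1) = f i) :
    ∀ᶠ i in atBot, f i = f n := by
  filter_upwards [eventually_le_atBot n] with i hi
  induction i, hi using Int.leInductionDown with
  | base => rfl
  | pred i hi ih => rw [h i hi, ih]

end IntSequences

section Twisted

variable {F}

lemma mem_dirSum_iff_eventually {f : ℤ → F} :
    f ∈ DirSum F ↔ (∀ᶠ i in atBot, f i = 1) ∧ ∀ᶠ i in atTop, f i = 1 := by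
  rw [← eventually_sup, ← Int.cofinite_eq, eventually_cofinite]
  rfl

lemma twistedConj_apply (g a : DirSum F) (i : ℤ) :
    ((g * a * (shiftHom F g)⁻¹ : DirSum F) : ℤ → F) i = g.1 i * a.1 i * (g.1 (i - 1))⁻¹ :=
  rfl

lemma deltaElt_apply (x : F) (i : ℤ) : (deltaElt F x : ℤ → F) i = if i = 0 then x else 1 :=
  rfl

def descProd (a : ℤ → F) (N : ℤ) : ℕ → F
  | 0 => 1
  | n + 1 => descProd a N n * a (N - n)

lemma exists_twisted_trivialization {a : ℤ → F} (ha : a ∈ DirSum F) :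
    ∃ T : ℤ → F, (∀ i, T (i - 1) = T i * a i) ∧ (∀ᶠ i in atTop, T i = 1) ∧
      ∃ c, ∀ᶠ i in atBot, T i = c := by
  obtain ⟨haBot, haTop⟩ := mem_dirSum_iff_eventually.mp ha
  obtain ⟨N, hN⟩ := eventually_atTop.mp haTop
  obtain ⟨L, hL⟩ := eventually_atBot.mp haBot
  set T : ℤ → F := fun i => descProd a N (N - i).toNat
  have hT : ∀ i, T (i - 1) = T i * a i := by
    intro i
    rcases le_or_gt i N with hi | hi
    · have hsucc : (N - (i - 1)).toNat = (N - i).toNat + 1 := by omega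
      simp only [T, hsucc, descProd]
      congr 2
      omega
    · have hzero : ∀ j, N ≤ j → (N - j).toNat = 0 := fun j hj => by omega
      simp only [T, hzero i hi.le, hzero (i - 1) (by omega), hN i hi.le, descProd, mul_one]
  refine ⟨T, hT, ?_, T L, eventually_atBot_eq_of_forall_le_sub_one fun i hi => ?_⟩
  · filter_upwards [eventually_ge_atTop N] with i hi
    simp only [T, show (N - i).toNat = 0 by omega, descProd]
  · rw [hT, hL i hi, mul_one]

lemma exists_deltaElt_twistedConj (a : DirSum F) :
    ∃ x : F, ∃ g : DirSum F, deltaElt F x = g * a * (shiftHom F g)⁻¹ := by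
  obtain ⟨T, hT, hTop, c, hBot⟩ := exists_twisted_trivialization a.2
  set k : ℤ → F := fun i => if 0 ≤ i then 1 else c⁻¹
  have hg : (fun i => k i * T i) ∈ DirSum F := by
    refine mem_dirSum_iff_eventually.mpr ⟨?_, ?_⟩
    · filter_upwards [hBot, eventually_lt_atBot 0] with i hTi hi
      simp [k, hTi, not_le.mpr hi]
    · filter_upwards [hTop, eventually_ge_atTop 0] with i hTi hi
      simp [k, hTi, hi]
  refine ⟨c, ⟨_, hg⟩, Subtype.ext <| funext fun i => ?_⟩
  rw [twistedConj_apply, deltaElt_apply]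
  change _ = k i * T i * a.1 i * (k (i - 1) * T (i - 1))⁻¹
  have hcancel : k i * T i * a.1 i * (k (i - 1) * (T i * a.1 i))⁻¹ = k i * (k (i - 1))⁻¹ := by
    group
  rw [hT, hcancel]
  rcases lt_trichotomy i 0 with hi | rfl | hi
  · simp only [k, if_neg hi.ne, if_neg (not_le.mpr hi), if_neg (show ¬0 ≤ i - 1 by omega),
      mul_inv_cancel]
  · simp [k]
  · simp only [k, if_neg hi.ne', if_pos hi.le, if_pos (show 0 ≤ i - 1 by omega), mul_inv_cancel]

lemma deltaElt_twistedConj_iff (x y : F) :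
    (∃ g : DirSum F, deltaElt F y = g * deltaElt F x * (shiftHom F g)⁻¹) ↔ x = y := by
  constructor
  · rintro ⟨g, hg⟩
    have hcoord (i : ℤ) := congrFun (congrArg Subtype.val hg) i
    simp only [twistedConj_apply, deltaElt_apply] at hcoord
    have hstep : ∀ i ≠ 0, g.1 i = g.1 (i - 1) := fun i hi =>
      mul_inv_eq_one.mp (by simpa [hi] using (hcoord i).symm)
    obtain ⟨hgBot, hgTop⟩ := mem_dirSum_iff_eventually.mp g.2
    have hg0 : g.1 0 = 1 := by
      have hconst := eventually_atTop_eq_of_forall_ge_add_one (f := g.1) (n := 0) fun i hi => by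
        rw [hstep (i + 1) (by omega), add_sub_cancel_right]
      obtain ⟨i, hi1, hi0⟩ := (hgTop.and hconst).exists
      rw [← hi0, hi1]
    have hg1 : g.1 (-1) = 1 := by
      have hconst := eventually_atBot_eq_of_forall_le_sub_one (f := g.1) (n := -1) fun i hi =>
        (hstep i (by omega)).symm
      obtain ⟨i, hi1, hi0⟩ := (hgBot.and hconst).exists
      rw [← hi0, hi1]
    simpa [hg0, hg1, eq_comm] using hcoord 0
  · rintro rfl
    exact ⟨1, by simp⟩

end Twisted

theorem shift_twisted_conjugacy_normal_form_general
    (F : Type*) [Group F] :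
    (∀ a : DirSum F, ∃ x : F,
        ∃ g : DirSum F, deltaElt F x = g * a * (shiftHom F g)⁻¹) ∧
    (∀ x y : F,
        (∃ g : DirSum F, deltaElt F y = g * deltaElt F x * (shiftHom F g)⁻¹) ↔ x = y) :=
  ⟨exists_deltaElt_twistedConj, deltaElt_twistedConj_iff⟩

theorem shift_twisted_conjugacy_normal_form
    (F : Type*) [Group F] [Finite F] [Nontrivial F] :
    (∀ a : DirSum F, ∃ x : F,
        ∃ g : DirSum F, deltaElt F x = g * a * (shiftHom F g)⁻¹) ∧
    (∀ x y : F,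
        (∃ g : DirSum F, deltaElt F y = g * deltaElt F x * (shiftHom F g)⁻¹) ↔ x = y) :=
  shift_twisted_conjugacy_normal_form_general F
end

section
/- Let F be a finite group, Γ = ⊕_{i∈ℤ} F, and φ the right shift automorphism. Then for every n ≥ 1, the Reidemeister number of φⁿ equals |F|ⁿ: R(φⁿ) = |F|ⁿ. -/
variable (F : Type*) [Group F]

/-!
Twisting `g` by `x` gives `i ↦ x i * g i * (x (i - n))⁻¹`. Twisting by an element with a single
nontrivial entry moves the highest (or lowest) entry of `g` by `n` towards `[0, n)`, so every class
meets the elements supported on `[0, n)`. If two such elements are twisted conjugate by `x`, then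
`x i = x (i - n)` outside `[0, n)`; following `i` along `i + n ℕ` or `i - n ℕ` shows that the
finitely supported `x` is trivial. So the classes are indexed by the maps `[0, n) → F`.
-/

namespace MonoidHom

variable {G : Type*} [Group G] (φ : G →* G)

def twistedConjugacyClass (g : G) : Set G := {h | ∃ x, h = x * g * (φ x)⁻¹}

variable {φ}

theorem mem_twistedConjugacyClass_self (g : G) : g ∈ φ.twistedConjugacyClass g :=
  ⟨1, by simp⟩

theorem twistedConjugacyClass_eq_of_mem {g h : G} (hh : h ∈ φ.twistedConjugacyClass g) :
    φ.twistedConjugacyClass h = φ.twistedConjugacyClass g := by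
  obtain ⟨x, rfl⟩ := hh
  ext k
  constructor
  · rintro ⟨y, rfl⟩
    exact ⟨y * x, by simp only [map_mul, mul_inv_rev]; group⟩
  · rintro ⟨y, rfl⟩
    exact ⟨y * x⁻¹, by simp only [map_mul, map_inv, mul_inv_rev, inv_inv]; group⟩

theorem mem_twistedConjugacyClass_trans {g h k : G} (hh : h ∈ φ.twistedConjugacyClass g)
    (hk : k ∈ φ.twistedConjugacyClass h) : k ∈ φ.twistedConjugacyClass g :=
  twistedConjugacyClass_eq_of_mem hh ▸ hk

theorem nat_card_range_twistedConjugacyClass (S : Set G)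
    (exists_mem : ∀ g, ∃ s ∈ φ.twistedConjugacyClass g, s ∈ S)
    (eq_of_mem : ∀ s ∈ S, ∀ t ∈ S, t ∈ φ.twistedConjugacyClass s → s = t) :
    Nat.card (Set.range φ.twistedConjugacyClass) = Nat.card S := by
  symm
  refine Nat.card_eq_of_bijective (fun s ↦ ⟨φ.twistedConjugacyClass s, s, rfl⟩) ⟨?_, ?_⟩
  · intro s t hst
    refine Subtype.ext (eq_of_mem s s.2 t t.2 ?_)
    rw [Subtype.mk.inj hst]
    exact mem_twistedConjugacyClass_self _
  · rintro ⟨_, g, rfl⟩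
    obtain ⟨s, hs, hS⟩ := exists_mem g
    exact ⟨⟨s, hS⟩, Subtype.ext (twistedConjugacyClass_eq_of_mem hs)⟩

end MonoidHom

namespace Function

open Set

theorem eq_one_of_mulSupport_finite_of_forall_apply_add_mul {M : Type*} [One M]
    {x : ℤ → M} (hx : (mulSupport x).Finite) {d : ℤ} (hd : d ≠ 0) {i : ℤ}
    (h : ∀ k : ℕ, x (i + k * d) = x i) : x i = 1 := by
  by_contra hi
  have hinj : Injective fun k : ℕ ↦ i + k * d := fun k l hkl ↦ by
    simpa [hd] using hkl
  refine infinite_range_of_injective hinj (hx.subset ?_)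
  rintro _ ⟨k, rfl⟩
  simpa [mem_mulSupport, h k] using hi

theorem eq_one_of_mulSupport_finite_of_periodic_off_Ico {M : Type*} [One M]
    {x : ℤ → M} (hx : (mulSupport x).Finite) {n : ℕ} (hn : 0 < n)
    (periodic : ∀ i ∉ Ico (0 : ℤ) n, x i = x (i - n)) : x = 1 := by
  have hn' : (n : ℤ) ≠ 0 := by positivity
  funext i
  rcases le_or_gt 0 i with hi | hi
  · refine eq_one_of_mulSupport_finite_of_forall_apply_add_mul hx hn' fun k ↦ ?_
    induction k with
    | zero => simp
    | succ k ih =>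
      have hk : (0 : ℤ) ≤ k * n := by positivity
      have hout : i + ↑(k + 1) * n ∉ Ico (0 : ℤ) n := by
        simp only [mem_Ico, not_and_or, not_lt]; right; push_cast; linarith
      rw [← ih, periodic _ hout]
      congr 1; push_cast; ring
  · refine eq_one_of_mulSupport_finite_of_forall_apply_add_mul hx (neg_ne_zero.mpr hn')
      fun k ↦ ?_
    induction k with
    | zero => simp
    | succ k ih =>
      have hk : (0 : ℤ) ≤ k * n := by positivity
      have hout : i + k * -n ∉ Ico (0 : ℤ) n := by
        simp only [mem_Ico, not_and_or, not_le]; left; linarith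
      rw [← ih, periodic _ hout]
      congr 1; push_cast; ring

end Function

namespace DirSum

variable {F}

open Function Set

def shiftBy (n : ℕ) : DirSum F →* DirSum F where
  toFun g := ⟨fun i ↦ (g : ℤ → F) (i - n),
    (g.2.image (· + (n : ℤ))).subset fun i hi ↦ ⟨i - n, hi, sub_add_cancel i n⟩⟩
  map_one' := rfl
  map_mul' _ _ := rfl

@[simp]
theorem shiftBy_apply (n : ℕ) (g : DirSum F) (i : ℤ) :
    (shiftBy n g : ℤ → F) i = (g : ℤ → F) (i - n) :=
  rfl

theorem iterate_shiftHom (n : ℕ) : (⇑(shiftHom F))^[n] = shiftBy n := by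
  induction n with
  | zero => funext g; ext i; simp
  | succ n ih =>
    funext g
    rw [Function.iterate_succ_apply', ih]
    ext i
    change (g : ℤ → F) (i - 1 - n) = (g : ℤ → F) (i - (n + 1 : ℕ))
    rw [Nat.cast_succ, sub_sub, add_comm]

def mulSingle (j : ℤ) (c : F) : DirSum F :=
  ⟨Pi.mulSingle j c, (finite_singleton j).subset Pi.mulSupport_mulSingle_subset⟩

theorem mul_mul_inv_shiftBy_apply (n : ℕ) (x g : DirSum F) (i : ℤ) :
    ((x * g * (shiftBy n x)⁻¹ : DirSum F) : ℤ → F) i =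
      (x : ℤ → F) i * (g : ℤ → F) i * ((x : ℤ → F) (i - n))⁻¹ :=
  rfl

theorem mulSingle_mul_mul_inv_shiftBy_apply (n : ℕ) (j : ℤ) (c : F) (g : DirSum F) (i : ℤ) :
    ((mulSingle j c * g * (shiftBy n (mulSingle j c))⁻¹ : DirSum F) : ℤ → F) i =
      (if i = j then c else 1) * (g : ℤ → F) i * (if i - n = j then c else 1)⁻¹ := by
  simp only [mul_mul_inv_shiftBy_apply, mulSingle, Pi.mulSingle_apply]

variable {n : ℕ}

theorem exists_twistedConj_mulSupport_subset_Ico_sub_one (hn : 0 < n) {g : DirSum F}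
    {a b : ℤ} (hg : mulSupport (g : ℤ → F) ⊆ Ico a b) (hab : a + n < b) :
    ∃ h ∈ (shiftBy n).twistedConjugacyClass g,
      mulSupport (h : ℤ → F) ⊆ Ico a (b - 1) := by
  refine ⟨_, ⟨mulSingle (b - 1 - n) ((g : ℤ → F) (b - 1)), rfl⟩, fun i hi ↦ ?_⟩
  rw [mem_mulSupport, mulSingle_mul_mul_inv_shiftBy_apply] at hi
  split_ifs at hi with h1 h2 h2
  · simp only [mem_Ico]; omega
  · simp only [mem_Ico]; omega
  · have : i = b - 1 := by omega
    subst this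
    simp at hi
  · have := hg (by simpa using hi)
    simp only [mem_Ico] at this ⊢
    omega

theorem exists_twistedConj_mulSupport_subset_Ico_add_one (hn : 0 < n) {g : DirSum F}
    {a b : ℤ} (hg : mulSupport (g : ℤ → F) ⊆ Ico a b) (hab : a + n < b) :
    ∃ h ∈ (shiftBy n).twistedConjugacyClass g,
      mulSupport (h : ℤ → F) ⊆ Ico (a + 1) b := by
  refine ⟨_, ⟨mulSingle a ((g : ℤ → F) a)⁻¹, rfl⟩, fun i hi ↦ ?_⟩
  rw [mem_mulSupport, mulSingle_mul_mul_inv_shiftBy_apply] at hi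
  split_ifs at hi with h1 h2 h2
  · omega
  · subst h1
    simp at hi
  · simp only [mem_Ico]; omega
  · have := hg (by simpa using hi)
    simp only [mem_Ico] at this ⊢
    omega

theorem exists_twistedConj_mulSupport_subset_Ico (hn : 0 < n) (g : DirSum F) :
    ∃ h ∈ (shiftBy n).twistedConjugacyClass g, mulSupport (h : ℤ → F) ⊆ Ico 0 n := by
  obtain ⟨N, hN⟩ : ∃ N : ℕ, mulSupport (g : ℤ → F) ⊆ Ico (-N) (n + N) := by
    obtain ⟨lo, hlo⟩ := g.2.bddBelow
    obtain ⟨hi, hhi⟩ := g.2.bddAbove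
    refine ⟨(max (-lo) hi).toNat, fun i hi' ↦ ?_⟩
    have := hlo hi'
    have := hhi hi'
    simp only [mem_Ico]
    omega
  induction N generalizing g with
  | zero => exact ⟨g, MonoidHom.mem_twistedConjugacyClass_self g, by simpa using hN⟩
  | succ N ih =>
    obtain ⟨g₁, hg₁, hsupp₁⟩ :=
      exists_twistedConj_mulSupport_subset_Ico_sub_one hn hN (by omega)
    obtain ⟨g₂, hg₂, hsupp₂⟩ :=
      exists_twistedConj_mulSupport_subset_Ico_add_one hn hsupp₁ (by omega)
    obtain ⟨h, hh, hsupp⟩ := ih g₂ (hsupp₂.trans (Ico_subset_Ico (by omega) (by omega)))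
    exact ⟨h, MonoidHom.mem_twistedConjugacyClass_trans hg₁
      (MonoidHom.mem_twistedConjugacyClass_trans hg₂ hh), hsupp⟩

theorem eq_of_mem_twistedConjugacyClass (hn : 0 < n) {g h : DirSum F}
    (hg : mulSupport (g : ℤ → F) ⊆ Ico 0 n) (hh : mulSupport (h : ℤ → F) ⊆ Ico 0 n)
    (hgh : h ∈ (shiftBy n).twistedConjugacyClass g) : g = h := by
  obtain ⟨x, rfl⟩ := hgh
  suffices hx : x = 1 by simp [hx]
  refine Subtype.ext (eq_one_of_mulSupport_finite_of_periodic_off_Ico x.2 hn fun i hi ↦ ?_)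
  have := mul_mul_inv_shiftBy_apply n x g i
  rwa [notMem_mulSupport.mp fun h' ↦ hi (hh h'), notMem_mulSupport.mp fun h' ↦ hi (hg h'),
    mul_one, eq_comm, mul_inv_eq_one] at this

open Classical in
noncomputable def mulSupportSubsetEquiv (s : Set ℤ) (hs : s.Finite) :
    {g : DirSum F | mulSupport (g : ℤ → F) ⊆ s} ≃ (s → F) where
  toFun g i := (g.1 : ℤ → F) i
  invFun v :=
    have hsupp : mulSupport (fun i ↦ if h : i ∈ s then v ⟨i, h⟩ else 1) ⊆ s :=
      fun i hi ↦ by_contra fun h ↦ hi (dif_neg h)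
    ⟨⟨_, hs.subset hsupp⟩, hsupp⟩
  left_inv g := by
    ext i
    by_cases hi : i ∈ s
    · simp [hi]
    · simp [hi, notMem_mulSupport.mp fun h ↦ hi (g.2 h)]
  right_inv v := by
    ext i
    simp

end DirSum

open Function Set in
theorem reidemeister_number_of_shift_iterate_general
    (F : Type*) [Group F] :
    ∀ n : ℕ, 1 ≤ n →
      Nat.card (Set.range fun g : DirSum F =>
          {h : DirSum F | ∃ x : DirSum F, h = x * g * ((⇑(shiftHom F))^[n] x)⁻¹})
        = (Nat.card F) ^ n := by
  intro n hn
  have hcard := MonoidHom.nat_card_range_twistedConjugacyClass (φ := DirSum.shiftBy n)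
    {g : DirSum F | mulSupport (g : ℤ → F) ⊆ Ico 0 n}
    (DirSum.exists_twistedConj_mulSupport_subset_Ico hn)
    (fun _ hg _ hh ↦ DirSum.eq_of_mem_twistedConjugacyClass hn hg hh)
  rw [DirSum.iterate_shiftHom]
  refine hcard.trans ?_
  rw [Nat.card_congr (DirSum.mulSupportSubsetEquiv _ (finite_Ico (0 : ℤ) n)), Nat.card_fun]
  simp

theorem reidemeister_number_of_shift_iterate
    (F : Type*) [Group F] [Finite F] :
    ∀ n : ℕ, 1 ≤ n →
      Nat.card (Set.range fun g : DirSum F =>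
          {h : DirSum F | ∃ x : DirSum F, h = x * g * ((⇑(shiftHom F))^[n] x)⁻¹})
        = (Nat.card F) ^ n :=
  reidemeister_number_of_shift_iterate_general F
end
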